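/- Let 0 < α < ω₁ and let f : X → Y have a σ-sfd base consisting of functionally ambiguous sets of class α. Then f is of the α'th functionally Lebesgue class: the preimage of every open set in Y is of the α'th functionally additive class in X. -/

import Mathlib

open Set Topology Ordinal

/-- A family of sets is discrete if every point has an open neighborhood
meeting at most one member of the family. -/
def DiscreteFam {X I : Type*} [TopologicalSpace X] (U : I → Set X) : Prop :=
  ∀ x : X, ∃ V : Set X, IsOpen V ∧ x ∈ V ∧
    ∀ i j : I, (V ∩ U i).Nonempty → (V ∩ U j).Nonempty → i = j

/-- A set is functionally closed (a zero set) if it is the preimage of `{0}`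
under a continuous real-valued function. -/
def FunClosed {X : Type*} [TopologicalSpace X] (F : Set X) : Prop :=
  ∃ f : X → ℝ, Continuous f ∧ F = f ⁻¹' {0}

/-- A set is functionally open if its complement is functionally closed. -/
def FunOpen {X : Type*} [TopologicalSpace X] (U : Set X) : Prop :=
  FunClosed Uᶜ

/-- The pair (α'th functionally multiplicative class, α'th functionally additive class),
defined by transfinite recursion. -/
noncomputable def FunClassPair (X : Type*) [TopologicalSpace X] (α : Ordinal) :
    Set (Set X) × Set (Set X) :=
  if α = 0 then ({F | FunClosed F}, {U | FunOpen U})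
  else
    ({ A | ∃ f : ℕ → Set X, (∀ n, ∃ β, ∃ _ : β < α, f n ∈ (FunClassPair X β).2) ∧ A = ⋂ n, f n },
     { A | ∃ f : ℕ → Set X, (∀ n, ∃ β, ∃ _ : β < α, f n ∈ (FunClassPair X β).1) ∧ A = ⋃ n, f n })
termination_by α

/-- The α'th functionally multiplicative class. -/
noncomputable def FunMul (X : Type*) [TopologicalSpace X] (α : Ordinal) : Set (Set X) :=
  (FunClassPair X α).1

/-- The α'th functionally additive class. -/
noncomputable def FunAdd (X : Type*) [TopologicalSpace X] (α : Ordinal) : Set (Set X) :=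
  (FunClassPair X α).2

/-- Functionally ambiguous sets of class α. -/
noncomputable def FunAmb {X : Type*} [TopologicalSpace X] (α : Ordinal) (A : Set X) : Prop :=
  A ∈ FunAdd X α ∧ A ∈ FunMul X α

/-- A family is strongly functionally discrete (sfd). -/
def SFDFam {X I : Type*} [TopologicalSpace X] (A : I → Set X) : Prop :=
  ∃ U : I → Set X, DiscreteFam U ∧ (∀ i, FunOpen (U i)) ∧ ∀ i, closure (A i) ⊆ U i

/-- A collection of sets is sfd (viewed as a family indexed by itself). -/
def SFDSet {X : Type*} [TopologicalSpace X] (𝒜 : Set (Set X)) : Prop :=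
  SFDFam (fun b : 𝒜 => (b : Set X))

/-- A collection of sets is a well sfd-family. -/
def WellSFDSet {X : Type*} [TopologicalSpace X] (𝒜 : Set (Set X)) : Prop :=
  ∃ U F : 𝒜 → Set X, DiscreteFam U ∧ DiscreteFam F ∧
    (∀ b, FunOpen (U b)) ∧ (∀ b, FunClosed (F b)) ∧
    ∀ b : 𝒜, (b : Set X) ⊆ F b ∧ F b ⊆ U b

/-- An indexed family is σ-sfd if the index set splits into countably many pieces
on each of which the family is sfd. -/
def SigmaSFDFam {X I : Type*} [TopologicalSpace X] (A : I → Set X) : Prop :=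
  ∃ J : ℕ → Set I, (∀ n, SFDFam (fun i : J n => A i)) ∧ (⋃ n, J n) = Set.univ

/-- `B` is a base for the mapping `f`: every preimage of an open set is a union
of members of `B`. -/
def IsBaseFor {X Y : Type*} [TopologicalSpace X] [TopologicalSpace Y]
    (B : Set (Set X)) (f : X → Y) : Prop :=
  ∀ V : Set Y, IsOpen V → ∃ S ⊆ B, f ⁻¹' V = ⋃₀ S

/-- `f` has a σ-strongly-functionally-discrete base. -/
def SigmaSFD {X Y : Type*} [TopologicalSpace X] [TopologicalSpace Y] (f : X → Y) : Prop :=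
  ∃ B : ℕ → Set (Set X), (∀ n, SFDSet (B n)) ∧ IsBaseFor (⋃ n, B n) f

/-- `f` has a σ-sfd base consisting of functionally ambiguous sets of class α. -/
noncomputable def SigmaSFDAmb {X Y : Type*} [TopologicalSpace X] [TopologicalSpace Y]
    (α : Ordinal) (f : X → Y) : Prop :=
  ∃ B : ℕ → Set (Set X), (∀ n, SFDSet (B n)) ∧ (∀ n, ∀ b ∈ B n, FunAmb α b) ∧
    IsBaseFor (⋃ n, B n) f

/-- `f` belongs to the α'th functionally Lebesgue class. -/
noncomputable def LebClass {X Y : Type*} [TopologicalSpace X] [TopologicalSpace Y]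
    (α : Ordinal) (f : X → Y) : Prop :=
  ∀ V : Set Y, IsOpen V → f ⁻¹' V ∈ FunAdd X α

/-- `Y` has a σ-disjoint base. -/
def SigmaDisjointBase (Y : Type*) [TopologicalSpace Y] : Prop :=
  ∃ V : ℕ → Set (Set Y), (∀ m, (V m).PairwiseDisjoint id) ∧
    TopologicalSpace.IsTopologicalBasis (⋃ m, V m)


open Set Topology Ordinal

/-!
It suffices that the union of a strongly functionally discrete family of sets of additive
class `α` is again of additive class `α`: the preimage of an open set is the union, over `n`,
of a subfamily of the `n`-th sfd family of the base.

This is proved for the multiplicative and the additive class simultaneously, by induction on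
`β < ω₁`, for families `A i ⊆ U i` where `U` is a discrete family of functionally open sets.
At level `0` the defining functions are glued along `U` (a locally finite sum). At level
`β > 0` each `A i` is a countable union (intersection) of sets of classes `< β`; sorting these
pieces by their class `γ < β`, of which there are only countably many, each level `γ` is the
union of a family subordinate to `U` to which the induction hypothesis applies.
-/

lemma abs_add_abs_eq_zero_iff {G : Type*} [AddCommGroup G] [LinearOrder G] [IsOrderedAddMonoid G]
    {a b : G} : |a| + |b| = 0 ↔ a = 0 ∧ b = 0 := by
  rw [add_eq_zero_iff_of_nonneg (abs_nonneg a) (abs_nonneg b), abs_eq_zero, abs_eq_zero]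

section FunctionallyClosed

variable {X : Type*} [TopologicalSpace X]

lemma funOpen_iff {U : Set X} : FunOpen U ↔ ∃ g : X → ℝ, Continuous g ∧ U = {x | g x ≠ 0} := by
  refine exists_congr fun g => and_congr_right fun _ => ?_
  rw [compl_eq_comm, eq_comm]
  rfl

lemma funClosed_setOf_le {g h : X → ℝ} (hg : Continuous g) (hh : Continuous h) :
    FunClosed {x | g x ≤ h x} :=
  ⟨fun x => max (g x - h x) 0, (hg.sub hh).max continuous_const, by ext; simp⟩

lemma funOpen_setOf_lt {g h : X → ℝ} (hg : Continuous g) (hh : Continuous h) :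
    FunOpen {x | g x < h x} := by
  simpa only [FunOpen, compl_ofPred, not_lt] using funClosed_setOf_le hh hg

lemma funClosed_empty : FunClosed (∅ : Set X) :=
  ⟨fun _ => 1, continuous_const, by ext; simp⟩

lemma funOpen_univ : FunOpen (univ : Set X) :=
  funOpen_iff.2 ⟨fun _ => 1, continuous_const, by ext; simp⟩

lemma FunClosed.inter {F G : Set X} (hF : FunClosed F) (hG : FunClosed G) :
    FunClosed (F ∩ G) := by
  obtain ⟨f, hf, rfl⟩ := hF
  obtain ⟨g, hg, rfl⟩ := hG
  refine ⟨fun x => |f x| + |g x|, hf.abs.add hg.abs, ?_⟩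
  ext
  simp [abs_add_abs_eq_zero_iff]

lemma FunOpen.inter {U V : Set X} (hU : FunOpen U) (hV : FunOpen V) : FunOpen (U ∩ V) := by
  obtain ⟨g, hg, rfl⟩ := funOpen_iff.1 hU
  obtain ⟨h, hh, rfl⟩ := funOpen_iff.1 hV
  exact funOpen_iff.2 ⟨g * h, hg.mul hh, by ext; simp⟩

lemma FunOpen.eq_iUnion_funClosed {U : Set X} (hU : FunOpen U) :
    ∃ K : ℕ → Set X, (∀ k, FunClosed (K k)) ∧ U = ⋃ k, K k := by
  obtain ⟨g, hg, rfl⟩ := funOpen_iff.1 hU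
  refine ⟨fun k => {x | 1 / ((k : ℝ) + 1) ≤ |g x|},
    fun k => funClosed_setOf_le continuous_const hg.abs, ?_⟩
  ext x
  simp only [mem_ofPred_eq, mem_iUnion]
  refine ⟨fun hx => ?_, fun ⟨k, hk⟩ => abs_pos.1 (Nat.one_div_pos_of_nat.trans_le hk)⟩
  exact (exists_nat_one_div_lt (abs_pos.2 hx)).imp fun _ => le_of_lt

lemma FunClosed.eq_iInter_funOpen {F : Set X} (hF : FunClosed F) :
    ∃ W : ℕ → Set X, (∀ k, FunOpen (W k)) ∧ F = ⋂ k, W k := by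
  obtain ⟨f, hf, rfl⟩ := hF
  refine ⟨fun k => {x | |f x| < 1 / ((k : ℝ) + 1)},
    fun k => funOpen_setOf_lt hf.abs continuous_const, ?_⟩
  ext x
  simp only [mem_preimage, mem_singleton_iff, mem_ofPred_eq, mem_iInter]
  refine ⟨fun hx k => by simpa [hx] using Nat.one_div_pos_of_nat (α := ℝ), fun hx => ?_⟩
  by_contra hx0
  obtain ⟨k, hk⟩ := exists_nat_one_div_lt (abs_pos.2 hx0)
  exact (hx k).not_gt hk

lemma FunClosed.exists_continuous_eq_one_iff {F U : Set X} (hF : FunClosed F) (hU : FunOpen U)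
    (hFU : F ⊆ U) :
    ∃ θ : X → ℝ, Continuous θ ∧ (∀ x ∉ U, θ x = 0) ∧ ∀ x, θ x = 1 ↔ x ∈ F := by
  obtain ⟨f, hf, rfl⟩ := hF
  obtain ⟨g, hg, rfl⟩ := funOpen_iff.1 hU
  have hden : ∀ x, |f x| + |g x| ≠ 0 := fun x h0 =>
    hFU (abs_add_abs_eq_zero_iff.1 h0).1 (abs_add_abs_eq_zero_iff.1 h0).2
  refine ⟨fun x => |g x| / (|f x| + |g x|), hg.abs.div (hf.abs.add hg.abs) hden,
    fun x hx => ?_, fun x => ?_⟩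
  · simp_all
  · rw [div_eq_one_iff_eq (hden x)]
    simp

end FunctionallyClosed

section Classes

variable {X : Type*} [TopologicalSpace X]

lemma mem_funMul_zero {A : Set X} : A ∈ FunMul X 0 ↔ FunClosed A := by
  rw [FunMul, FunClassPair]
  simp

lemma mem_funAdd_zero {A : Set X} : A ∈ FunAdd X 0 ↔ FunOpen A := by
  rw [FunAdd, FunClassPair]
  simp

lemma mem_funMul_iff {α : Ordinal} (hα : α ≠ 0) {A : Set X} :
    A ∈ FunMul X α ↔ ∃ g : ℕ → Set X, (∀ n, ∃ β < α, g n ∈ FunAdd X β) ∧ A = ⋂ n, g n := by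
  rw [FunMul, FunClassPair, if_neg hα]
  simp only [exists_prop]
  rfl

lemma mem_funAdd_iff {α : Ordinal} (hα : α ≠ 0) {A : Set X} :
    A ∈ FunAdd X α ↔ ∃ g : ℕ → Set X, (∀ n, ∃ β < α, g n ∈ FunMul X β) ∧ A = ⋃ n, g n := by
  rw [FunAdd, FunClassPair, if_neg hα]
  simp only [exists_prop]
  rfl

lemma iInter_mem_funMul_of_mem_funAdd {ι : Type*} [Countable ι] {α : Ordinal} (hα : α ≠ 0)
    {A : ι → Set X} (hA : ∀ i, ∃ β < α, A i ∈ FunAdd X β) : ⋂ i, A i ∈ FunMul X α := by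
  rw [mem_funMul_iff hα]
  rcases isEmpty_or_nonempty ι with hι | hι
  · exact ⟨fun _ => univ, fun _ => ⟨0, pos_iff_ne_zero.2 hα, mem_funAdd_zero.2 funOpen_univ⟩,
      by simp⟩
  · obtain ⟨s, hs⟩ := exists_surjective_nat ι
    exact ⟨A ∘ s, fun n => hA (s n), (hs.iInter_comp A).symm⟩

lemma iUnion_mem_funAdd_of_mem_funMul {ι : Type*} [Countable ι] {α : Ordinal} (hα : α ≠ 0)
    {A : ι → Set X} (hA : ∀ i, ∃ β < α, A i ∈ FunMul X β) : ⋃ i, A i ∈ FunAdd X α := by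
  rw [mem_funAdd_iff hα]
  rcases isEmpty_or_nonempty ι with hι | hι
  · exact ⟨fun _ => ∅, fun _ => ⟨0, pos_iff_ne_zero.2 hα, mem_funMul_zero.2 funClosed_empty⟩,
      by simp⟩
  · obtain ⟨s, hs⟩ := exists_surjective_nat ι
    exact ⟨A ∘ s, fun n => hA (s n), (hs.iUnion_comp A).symm⟩

lemma funClosed_mem_funMul {F : Set X} (hF : FunClosed F) (α : Ordinal) : F ∈ FunMul X α := by
  rcases eq_or_ne α 0 with rfl | hα
  · exact mem_funMul_zero.2 hF
  · obtain ⟨W, hW, rfl⟩ := hF.eq_iInter_funOpen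
    exact iInter_mem_funMul_of_mem_funAdd hα fun k =>
      ⟨0, pos_iff_ne_zero.2 hα, mem_funAdd_zero.2 (hW k)⟩

lemma funOpen_mem_funAdd {U : Set X} (hU : FunOpen U) (α : Ordinal) : U ∈ FunAdd X α := by
  rcases eq_or_ne α 0 with rfl | hα
  · exact mem_funAdd_zero.2 hU
  · obtain ⟨K, hK, rfl⟩ := hU.eq_iUnion_funClosed
    exact iUnion_mem_funAdd_of_mem_funMul hα fun k =>
      ⟨0, pos_iff_ne_zero.2 hα, mem_funMul_zero.2 (hK k)⟩

lemma funMul_mono {β γ : Ordinal} (h : β ≤ γ) : FunMul X β ⊆ FunMul X γ := by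
  intro M hM
  rcases eq_or_ne β 0 with rfl | hβ
  · exact funClosed_mem_funMul (mem_funMul_zero.1 hM) γ
  · obtain ⟨g, hg, rfl⟩ := (mem_funMul_iff hβ).1 hM
    exact iInter_mem_funMul_of_mem_funAdd (pos_iff_ne_zero.2 hβ |>.trans_le h).ne' fun n =>
      (hg n).imp fun _ ⟨hδ, hgn⟩ => ⟨hδ.trans_le h, hgn⟩

lemma funAdd_mono {β γ : Ordinal} (h : β ≤ γ) : FunAdd X β ⊆ FunAdd X γ := by
  intro A hA
  rcases eq_or_ne β 0 with rfl | hβ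
  · exact funOpen_mem_funAdd (mem_funAdd_zero.1 hA) γ
  · obtain ⟨g, hg, rfl⟩ := (mem_funAdd_iff hβ).1 hA
    exact iUnion_mem_funAdd_of_mem_funMul (pos_iff_ne_zero.2 hβ |>.trans_le h).ne' fun n =>
      (hg n).imp fun _ ⟨hδ, hgn⟩ => ⟨hδ.trans_le h, hgn⟩

lemma iUnion_mem_funAdd {ι : Type*} [Countable ι] {α : Ordinal} (hα : α ≠ 0)
    {A : ι → Set X} (hA : ∀ i, A i ∈ FunAdd X α) : ⋃ i, A i ∈ FunAdd X α := by
  choose g hg hAg using fun i => (mem_funAdd_iff hα).1 (hA i)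
  have hA_eq : ⋃ i, A i = ⋃ p : ι × ℕ, g p.1 p.2 := by
    rw [iUnion_prod']
    exact iUnion_congr hAg
  rw [hA_eq]
  exact iUnion_mem_funAdd_of_mem_funMul hα fun p => hg p.1 p.2

lemma inter_mem_funMul_of_funClosed {α : Ordinal} {M K : Set X} (hM : M ∈ FunMul X α)
    (hK : FunClosed K) : M ∩ K ∈ FunMul X α := by
  rcases eq_or_ne α 0 with rfl | hα
  · exact mem_funMul_zero.2 ((mem_funMul_zero.1 hM).inter hK)
  · obtain ⟨g, hg, rfl⟩ := (mem_funMul_iff hα).1 hM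
    obtain ⟨W, hW, rfl⟩ := hK.eq_iInter_funOpen
    have hMK : (⋂ n, g n) ∩ ⋂ k, W k = ⋂ s, Sum.elim g W s := by
      rw [iInter_sum]
      rfl
    rw [hMK]
    refine iInter_mem_funMul_of_mem_funAdd hα fun s => ?_
    rcases s with n | k
    · exact hg n
    · exact ⟨0, pos_iff_ne_zero.2 hα, mem_funAdd_zero.2 (hW k)⟩

lemma inter_mem_funAdd_of_funOpen {α : Ordinal} {A U : Set X} (hA : A ∈ FunAdd X α)
    (hU : FunOpen U) : A ∩ U ∈ FunAdd X α := by
  rcases eq_or_ne α 0 with rfl | hα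
  · exact mem_funAdd_zero.2 ((mem_funAdd_zero.1 hA).inter hU)
  · obtain ⟨g, hg, rfl⟩ := (mem_funAdd_iff hα).1 hA
    obtain ⟨K, hK, rfl⟩ := hU.eq_iUnion_funClosed
    rw [iUnion_inter_iUnion, ← iUnion_prod' fun p : ℕ × ℕ => g p.1 ∩ K p.2]
    exact iUnion_mem_funAdd_of_mem_funMul hα fun p =>
      (hg p.1).imp fun _ ⟨hβ, hgp⟩ => ⟨hβ, inter_mem_funMul_of_funClosed hgp (hK p.2)⟩

end Classes

lemma Ordinal.countable_Iio_of_lt_omega_one {β : Ordinal} (hβ : β < ω₁) : (Iio β).Countable := by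
  rw [← Cardinal.le_aleph0_iff_set_countable, Cardinal.mk_Iio_ordinal, Cardinal.lift_le_aleph0,
    ← Cardinal.lt_aleph_one_iff, ← Cardinal.lt_ord, Cardinal.ord_aleph]
  exact hβ

namespace DiscreteFam

variable {X I : Type*} [TopologicalSpace X] {U : I → Set X}

lemma eq_of_mem (hU : DiscreteFam U) {x : X} {i j : I} (hi : x ∈ U i) (hj : x ∈ U j) : i = j := by
  obtain ⟨V, -, hxV, hV⟩ := hU x
  exact hV i j ⟨x, hxV, hi⟩ ⟨x, hxV, hj⟩

lemma mono (hU : DiscreteFam U) {A : I → Set X} (hAU : ∀ i, A i ⊆ U i) : DiscreteFam A := by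
  intro x
  obtain ⟨V, hVo, hxV, hV⟩ := hU x
  exact ⟨V, hVo, hxV, fun i j hi hj =>
    hV i j (hi.mono (inter_subset_inter_right V (hAU i)))
      (hj.mono (inter_subset_inter_right V (hAU j)))⟩

lemma comp (hU : DiscreteFam U) {J : Type*} {e : J → I} (he : Function.Injective e) :
    DiscreteFam (U ∘ e) := by
  intro x
  obtain ⟨V, hVo, hxV, hV⟩ := hU x
  exact ⟨V, hVo, hxV, fun i j hi hj => he (hV (e i) (e j) hi hj)⟩

lemma locallyFinite (hU : DiscreteFam U) : LocallyFinite U := by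
  intro x
  obtain ⟨V, hVo, hxV, hV⟩ := hU x
  refine ⟨V, hVo.mem_nhds hxV, Subsingleton.finite fun i hi j hj => hV i j ?_ ?_⟩
  · rwa [inter_comm]
  · rwa [inter_comm]

variable {M : Type*} [AddCommMonoid M] {θ : I → X → M}

lemma finsum_eq_of_mem (hU : DiscreteFam U) (hθ : ∀ i, ∀ x ∉ U i, θ i x = 0) {x : X} {i : I}
    (hx : x ∈ U i) : ∑ᶠ j, θ j x = θ i x :=
  finsum_eq_single _ i fun j hj => hθ j x fun hxj => hj (hU.eq_of_mem hxj hx)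

lemma continuous_finsum [TopologicalSpace M] [ContinuousAdd M] (hU : DiscreteFam U)
    (hθc : ∀ i, Continuous (θ i)) (hθ : ∀ i, ∀ x ∉ U i, θ i x = 0) :
    Continuous fun x => ∑ᶠ i, θ i x :=
  _root_.continuous_finsum hθc
    (hU.locallyFinite.subset fun i => Function.support_subset_iff'.2 (hθ i))

lemma funOpen_iUnion (hU : DiscreteFam U) (hUo : ∀ i, FunOpen (U i)) : FunOpen (⋃ i, U i) := by
  choose g hg hgU using fun i => funOpen_iff.1 (hUo i)
  have hvan : ∀ i, ∀ x ∉ U i, g i x = 0 := fun i x hx => by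
    simpa [hgU i] using hx
  refine funOpen_iff.2 ⟨fun x => ∑ᶠ i, g i x, hU.continuous_finsum hg hvan, ?_⟩
  ext x
  by_cases hx : ∃ i, x ∈ U i
  · obtain ⟨i, hxi⟩ := hx
    have hgx : g i x ≠ 0 := by simpa [hgU i] using hxi
    simpa [hU.finsum_eq_of_mem hvan hxi, hgx] using ⟨i, hxi⟩
  · rw [not_exists] at hx
    simpa [finsum_eq_zero_of_forall_eq_zero fun i => hvan i x (hx i)] using hx

lemma funClosed_iUnion (hU : DiscreteFam U) (hUo : ∀ i, FunOpen (U i)) {F : I → Set X}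
    (hF : ∀ i, FunClosed (F i)) (hFU : ∀ i, F i ⊆ U i) : FunClosed (⋃ i, F i) := by
  choose θ hθc hθU hθF using fun i => (hF i).exists_continuous_eq_one_iff (hUo i) (hFU i)
  refine ⟨fun x => ∑ᶠ i, θ i x - 1, (hU.continuous_finsum hθc hθU).sub continuous_const, ?_⟩
  ext x
  simp only [mem_iUnion, mem_preimage, mem_singleton_iff, sub_eq_zero]
  by_cases hx : ∃ i, x ∈ U i
  · obtain ⟨i, hxi⟩ := hx
    rw [hU.finsum_eq_of_mem hθU hxi, hθF]
    exact ⟨fun ⟨j, hj⟩ => hU.eq_of_mem (hFU j hj) hxi ▸ hj, fun h => ⟨i, h⟩⟩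
  · rw [not_exists] at hx
    rw [finsum_eq_zero_of_forall_eq_zero fun i => hθU i x (hx i)]
    exact ⟨fun ⟨j, hj⟩ => absurd (hFU j hj) (hx j), fun h => absurd h zero_ne_one⟩

end DiscreteFam

section SFD

variable {X : Type*} [TopologicalSpace X]

lemma DiscreteFam.iUnion_mem_funMul_of_forall_lt {I : Type*} {U : I → Set X}
    (hU : DiscreteFam U) (hUo : ∀ i, FunOpen (U i)) {β : Ordinal} (hβ : β ≠ 0)
    (hc : (Iio β).Countable)
    (ih : ∀ γ < β, ∀ A : I → Set X, (∀ i, A i ⊆ U i) → (∀ i, A i ∈ FunAdd X γ) →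
      ⋃ i, A i ∈ FunAdd X γ)
    {M : I → Set X} (hMU : ∀ i, M i ⊆ U i) (hM : ∀ i, M i ∈ FunMul X β) :
    ⋃ i, M i ∈ FunMul X β := by
  classical
  have := hc.to_subtype
  choose g hg hMg using fun i => (mem_funMul_iff hβ).1 (hM i)
  choose ρ hρ hgρ using hg
  -- `∩ U i` keeps the family subordinate to `U`, as the induction hypothesis requires.
  let D : ℕ × Iio β → I → Set X := fun p i => (if ρ i p.1 ≤ p.2 then g i p.1 else univ) ∩ U i
  have hD : ∀ p, ⋃ i, D p i ∈ FunAdd X p.2 := fun p =>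
    ih p.2 p.2.2 (D p) (fun i => inter_subset_right) fun i => by
      refine inter_mem_funAdd_of_funOpen ?_ (hUo i)
      split_ifs with h
      exacts [funAdd_mono h (hgρ i p.1), funOpen_mem_funAdd funOpen_univ _]
  have hM_eq : ⋃ i, M i = ⋂ p, ⋃ i, D p i := by
    ext x
    simp only [mem_iUnion, mem_iInter]
    constructor
    · rintro ⟨i, hx⟩ p
      refine ⟨i, ?_, hMU i hx⟩
      rw [hMg i, mem_iInter] at hx
      split_ifs
      exacts [hx _, mem_univ x]
    · intro hx
      obtain ⟨i, -, hxi⟩ := hx (0, ⟨0, pos_iff_ne_zero.2 hβ⟩)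
      refine ⟨i, hMg i ▸ mem_iInter.2 fun n => ?_⟩
      obtain ⟨j, hxj, hj⟩ := hx (n, ⟨ρ i n, hρ i n⟩)
      obtain rfl := hU.eq_of_mem hj hxi
      simpa [D] using hxj
  rw [hM_eq]
  exact iInter_mem_funMul_of_mem_funAdd hβ fun p => ⟨p.2, p.2.2, hD p⟩

lemma DiscreteFam.iUnion_mem_funAdd_of_forall_lt {I : Type*} {U : I → Set X}
    {β : Ordinal} (hβ : β ≠ 0) (hc : (Iio β).Countable)
    (ih : ∀ γ < β, ∀ M : I → Set X, (∀ i, M i ⊆ U i) → (∀ i, M i ∈ FunMul X γ) →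
      ⋃ i, M i ∈ FunMul X γ)
    {A : I → Set X} (hAU : ∀ i, A i ⊆ U i) (hA : ∀ i, A i ∈ FunAdd X β) :
    ⋃ i, A i ∈ FunAdd X β := by
  classical
  have := hc.to_subtype
  choose g hg hAg using fun i => (mem_funAdd_iff hβ).1 (hA i)
  choose ρ hρ hgρ using hg
  have hgU : ∀ i n, g i n ⊆ U i := fun i n => (subset_iUnion (g i) n).trans (hAg i ▸ hAU i)
  let D : ℕ × Iio β → I → Set X := fun p i => if ρ i p.1 ≤ p.2 then g i p.1 else ∅
  have hD : ∀ p, ⋃ i, D p i ∈ FunMul X p.2 := fun p =>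
    ih p.2 p.2.2 (D p)
      (fun i => by
        dsimp only [D]
        split_ifs
        exacts [hgU i p.1, empty_subset _])
      fun i => by
        dsimp only [D]
        split_ifs with h
        exacts [funMul_mono h (hgρ i p.1), funClosed_mem_funMul funClosed_empty _]
  have hA_eq : ⋃ i, A i = ⋃ p, ⋃ i, D p i := by
    ext x
    simp only [mem_iUnion]
    constructor
    · rintro ⟨i, hx⟩
      rw [hAg i, mem_iUnion] at hx
      obtain ⟨n, hxn⟩ := hx
      exact ⟨(n, ⟨ρ i n, hρ i n⟩), i, by simpa [D] using hxn⟩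
    · rintro ⟨p, i, hx⟩
      refine ⟨i, hAg i ▸ mem_iUnion.2 ⟨p.1, ?_⟩⟩
      dsimp only [D] at hx
      split_ifs at hx
      exacts [hx, absurd hx (notMem_empty x)]
  rw [hA_eq]
  exact iUnion_mem_funAdd_of_mem_funMul hβ fun p => ⟨p.2, p.2.2, hD p⟩

theorem DiscreteFam.iUnion_mem_funMul_and_funAdd {I : Type*} {U : I → Set X}
    (hU : DiscreteFam U) (hUo : ∀ i, FunOpen (U i)) {β : Ordinal} (hβ : β < ω₁) :
    (∀ M : I → Set X, (∀ i, M i ⊆ U i) → (∀ i, M i ∈ FunMul X β) → ⋃ i, M i ∈ FunMul X β) ∧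
      (∀ A : I → Set X, (∀ i, A i ⊆ U i) → (∀ i, A i ∈ FunAdd X β) →
        ⋃ i, A i ∈ FunAdd X β) := by
  induction β using WellFoundedLT.induction with
  | _ β ih =>
  rcases eq_or_ne β 0 with rfl | hβ0
  · exact ⟨fun M hMU hM => mem_funMul_zero.2 <|
        hU.funClosed_iUnion hUo (fun i => mem_funMul_zero.1 (hM i)) hMU,
      fun A hAU hA => mem_funAdd_zero.2 <|
        (hU.mono hAU).funOpen_iUnion fun i => mem_funAdd_zero.1 (hA i)⟩
  · have hc := countable_Iio_of_lt_omega_one hβ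
    exact ⟨fun M => hU.iUnion_mem_funMul_of_forall_lt hUo hβ0 hc
        fun γ hγ => (ih γ hγ (hγ.trans hβ)).2,
      fun A => iUnion_mem_funAdd_of_forall_lt hβ0 hc fun γ hγ => (ih γ hγ (hγ.trans hβ)).1⟩

lemma SFDFam.iUnion_mem_funAdd {I : Type*} {A : I → Set X} (h : SFDFam A) {α : Ordinal}
    (hα : α < ω₁) (hA : ∀ i, A i ∈ FunAdd X α) : ⋃ i, A i ∈ FunAdd X α := by
  obtain ⟨U, hU, hUo, hAU⟩ := h
  exact (hU.iUnion_mem_funMul_and_funAdd hUo hα).2 A (fun i => subset_closure.trans (hAU i)) hA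

lemma SFDFam.comp {I J : Type*} {A : I → Set X} (h : SFDFam A) {e : J → I}
    (he : Function.Injective e) : SFDFam (A ∘ e) := by
  obtain ⟨U, hU, hUo, hAU⟩ := h
  exact ⟨U ∘ e, hU.comp he, fun j => hUo (e j), fun j => hAU (e j)⟩

lemma SFDSet.mono {𝒜 𝒞 : Set (Set X)} (h : SFDSet 𝒜) (h𝒞 : 𝒞 ⊆ 𝒜) : SFDSet 𝒞 :=
  SFDFam.comp h (inclusion_injective h𝒞)

lemma SFDSet.sUnion_mem_funAdd {𝒜 : Set (Set X)} (h : SFDSet 𝒜) {α : Ordinal} (hα : α < ω₁)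
    (h𝒜 : ∀ b ∈ 𝒜, b ∈ FunAdd X α) : ⋃₀ 𝒜 ∈ FunAdd X α := by
  rw [sUnion_eq_iUnion]
  exact SFDFam.iUnion_mem_funAdd h hα fun b => h𝒜 b b.2

end SFD

theorem stmt8 {X Y : Type*} [TopologicalSpace X] [TopologicalSpace Y]
    (α : Ordinal) (h0 : 0 < α) (hα : α < ω₁)
    (f : X → Y) (hf : SigmaSFDAmb α f) :
    LebClass α f := by
  obtain ⟨B, hB, hBamb, hbase⟩ := hf
  intro V hV
  obtain ⟨S, hSB, hVS⟩ := hbase V hV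
  have hV_eq : f ⁻¹' V = ⋃ n, ⋃₀ (B n ∩ S) := by
    rw [hVS, ← sUnion_iUnion, ← iUnion_inter, inter_eq_right.2 hSB]
  rw [hV_eq]
  exact iUnion_mem_funAdd h0.ne' fun n =>
    ((hB n).mono inter_subset_left).sUnion_mem_funAdd hα fun b hb => (hBamb n b hb.1).1
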